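/- Let $p$ be a prime with $p \mid q_1$, $p \mid q_2$, and $(p, q_3) = 1$. Then $b(p) = \sum_{a=1}^{p-1} c_1(a,p) c_2(a,p) c_3(a,p) e(-na/p)$ equals $1-p$ if $p \mid a_1 + a_2 - n$, and equals $1$ if $p \nmid a_1 + a_2 - n$. -/

import Mathlib

open Finset

/-- `e(x) = e^{2πix}`. -/
noncomputable def e (x : ℂ) : ℂ := Complex.exp (2 * Real.pi * Complex.I * x)

/-- The generalized Ramanujan sum. -/
noncomputable def ramanujanC (aj : ℤ) (qj : ℕ) (a : ℤ) (q : ℕ) : ℂ :=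
  ∑ k ∈ (Finset.Icc 1 q).filter
      (fun k => Nat.Coprime k q ∧ (k : ℤ) % (Nat.gcd qj q : ℤ) = aj % (Nat.gcd qj q : ℤ)),
    e ((a : ℂ) * k / q)

/-- `b(q) = ∑_{a < q, (a,q)=1} c₁(a,q) c₂(a,q) c₃(a,q) e(-na/q)`. -/
noncomputable def bfun (n a1 a2 a3 : ℤ) (q1 q2 q3 : ℕ) (q : ℕ) : ℂ :=
  ∑ a ∈ (Finset.range q).filter (fun a => Nat.Coprime a q),
    ramanujanC a1 q1 (a : ℤ) q * ramanujanC a2 q2 (a : ℤ) q * ramanujanC a3 q3 (a : ℤ) q *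
      e (-(n : ℂ) * a / q)

/-!
For a prime `p` the units modulo `p` are `1, …, p - 1`. When `p ∣ q_j` and `(a_j, p) = 1` the
congruence `m ≡ a_j (mod p)` leaves a single term, so `c_j(a, p) = e(a a_j / p)`; when `p ∤ q_j`
it is vacuous and `c_3(a, p)` is the Ramanujan sum `∑_{m=1}^{p-1} e(am/p) = -1`. Hence
`b(p) = -∑_{a=1}^{p-1} e((a_1 + a_2 - n) a / p)`, which is `1 - p` or `1` according as `p` divides
`a_1 + a_2 - n` or not, because a complete sum of nontrivial `p`-th roots of unity vanishes.
-/

lemma e_add (x y : ℂ) : e (x + y) = e x * e y := by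
  simp only [e, mul_add, Complex.exp_add]

lemma e_intCast (m : ℤ) : e m = 1 := by
  rw [e, mul_comm]
  exact_mod_cast Complex.exp_int_mul_two_pi_mul_I m

lemma e_zero : e 0 = 1 := by
  simp [e]

lemma e_natCast_mul (k : ℕ) (x : ℂ) : e (k * x) = e x ^ k := by
  rw [e, e, ← Complex.exp_nat_mul]
  ring_nf

lemma e_intCast_div_eq_one_iff {q : ℕ} (hq : q ≠ 0) (m : ℤ) :
    e (m / q) = 1 ↔ (q : ℤ) ∣ m := by
  have hq' : (q : ℂ) ≠ 0 := Nat.cast_ne_zero.mpr hq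
  rw [e, Complex.exp_eq_one_iff]
  constructor
  · rintro ⟨t, ht⟩
    refine ⟨t, ?_⟩
    have : (m : ℂ) = q * t := by
      field_simp at ht
      linear_combination ht
    exact_mod_cast this
  · rintro ⟨t, rfl⟩
    exact ⟨t, by push_cast; field_simp⟩

lemma e_mul_div_congr {q : ℕ} {k m : ℤ} (a : ℤ) (h : k ≡ m [ZMOD q]) :
    e (a * k / q) = e (a * m / q) := by
  obtain ⟨t, ht⟩ := h.dvd
  rcases eq_or_ne q 0 with rfl | hq
  · simp_all
  have hm : (a : ℂ) * m / q = a * k / q + (a * t : ℤ) := by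
    rw [eq_add_of_sub_eq' ht]
    push_cast
    field_simp
  rw [hm, e_add, e_intCast, mul_one]

lemma sum_range_e_eq_zero {q : ℕ} {m : ℤ} (h : ¬ (q : ℤ) ∣ m) :
    ∑ a ∈ range q, e (m * a / q) = 0 := by
  rcases eq_or_ne q 0 with rfl | hq
  · simp
  have hq' : (q : ℂ) ≠ 0 := Nat.cast_ne_zero.mpr hq
  set ζ := e (m / q)
  have hζ : ζ ≠ 1 := (e_intCast_div_eq_one_iff hq m).not.mpr h
  have hζq : ζ ^ q = 1 := by
    rw [← e_natCast_mul, mul_div_cancel₀ _ hq', e_intCast]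
  calc ∑ a ∈ range q, e (m * a / q) = ∑ a ∈ range q, ζ ^ a := by
        refine sum_congr rfl fun a _ => ?_
        rw [← e_natCast_mul]
        ring_nf
    _ = 0 := by rw [geom_sum_eq hζ, hζq, sub_self, zero_div]

lemma sum_Ico_one_e {q : ℕ} (hq : q ≠ 0) (m : ℤ) :
    ∑ a ∈ Ico 1 q, e (m * a / q) = if (q : ℤ) ∣ m then (q : ℂ) - 1 else -1 := by
  split_ifs with h
  · have hone : ∀ a ∈ Ico 1 q, e (m * a / q) = 1 := fun a _ => by
      rw [← Int.cast_natCast a, ← Int.cast_mul,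
        (e_intCast_div_eq_one_iff hq _).mpr (dvd_mul_of_dvd_left h _)]
    rw [sum_congr rfl hone, sum_const, Nat.card_Ico, nsmul_one,
      Nat.cast_sub (Nat.one_le_iff_ne_zero.mpr hq), Nat.cast_one]
  · have hfull := sum_range_e_eq_zero h
    rw [range_eq_Ico, sum_eq_sum_Ico_succ_bot (Nat.pos_of_ne_zero hq), Nat.cast_zero, mul_zero,
      zero_div, e_zero] at hfull
    linear_combination hfull

lemma ramanujanC_of_dvd {aj : ℤ} {qj q : ℕ} (hq0 : 0 < q) (hq : q ∣ qj)
    (hcop : Int.gcd aj q = 1) (a : ℤ) : ramanujanC aj qj a q = e (a * aj / q) := by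
  have hr0 : 0 ≤ (aj - 1) % q := Int.emod_nonneg _ (by exact_mod_cast hq0.ne')
  have hrq : (aj - 1) % q < q := Int.emod_lt_of_pos _ (by exact_mod_cast hq0)
  -- the representative of `aj` in `[1, q]`, the range of summation
  set k₀ : ℕ := ((aj - 1) % q + 1).toNat
  have hk₀ : (k₀ : ℤ) = (aj - 1) % q + 1 := Int.toNat_of_nonneg (by omega)
  have hk₀aj : (k₀ : ℤ) ≡ aj [ZMOD q] := by
    rw [hk₀]
    simpa using (Int.mod_modEq (aj - 1) q).add_right 1
  have hfilter : (Icc 1 q).filter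
      (fun k => Nat.Coprime k q ∧ (k : ℤ) % (Nat.gcd qj q : ℤ) = aj % (Nat.gcd qj q : ℤ)) =
      {k₀} := by
    ext k
    simp only [mem_filter, mem_Icc, mem_singleton, Nat.gcd_eq_right hq]
    constructor
    · rintro ⟨⟨hk1, hkq⟩, -, hk⟩
      have : (k : ℤ) - 1 = (aj - 1) % q := by
        rw [← Int.emod_eq_of_lt (by omega) (by omega : (k : ℤ) - 1 < q)]
        exact Int.ModEq.sub_right 1 hk
      omega
    · rintro rfl
      refine ⟨⟨by omega, by omega⟩, ?_, hk₀aj⟩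
      rw [Nat.Coprime, ← Int.gcd_natCast_natCast, ← Int.gcd_emod, hk₀aj, Int.gcd_emod, hcop]
  rw [ramanujanC, hfilter, sum_singleton]
  exact e_mul_div_congr a hk₀aj

lemma ramanujanC_of_coprime {aj : ℤ} {qj q : ℕ} (h : Nat.Coprime qj q) (a : ℤ) :
    ramanujanC aj qj a q = ∑ k ∈ (Icc 1 q).filter (Nat.Coprime · q), e (a * k / q) := by
  simp only [ramanujanC, Nat.Coprime.gcd_eq_one h, Nat.cast_one, Int.emod_one, and_true]

lemma Nat.Prime.filter_coprime_range {p : ℕ} (hp : p.Prime) :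
    (range p).filter (Nat.Coprime · p) = Ico 1 p := by
  ext k
  simp only [mem_filter, mem_range, mem_Ico]
  constructor
  · rintro ⟨hkp, hcop⟩
    refine ⟨Nat.pos_of_ne_zero ?_, hkp⟩
    rintro rfl
    exact hp.one_lt.ne' (Nat.coprime_zero_left _ |>.mp hcop)
  · rintro ⟨hk1, hkp⟩
    exact ⟨hkp, (Nat.coprime_of_lt_prime (by omega) hkp hp).symm⟩

lemma Nat.Prime.filter_coprime_Icc {p : ℕ} (hp : p.Prime) :
    (Icc 1 p).filter (Nat.Coprime · p) = Ico 1 p := by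
  ext k
  simp only [mem_filter, mem_Icc, mem_Ico]
  constructor
  · rintro ⟨⟨hk1, hkp⟩, hcop⟩
    refine ⟨hk1, lt_of_le_of_ne hkp ?_⟩
    rintro rfl
    exact hp.one_lt.ne' (Nat.coprime_self _ |>.mp hcop)
  · rintro ⟨hk1, hkp⟩
    exact ⟨⟨hk1, hkp.le⟩, (Nat.coprime_of_lt_prime (by omega) hkp hp).symm⟩

lemma Int.gcd_eq_one_of_dvd_right {a : ℤ} {m n : ℕ} (h : Int.gcd a m = 1) (hnm : n ∣ m) :
    Int.gcd a n = 1 :=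
  Nat.dvd_one.mp (h ▸ Int.gcd_dvd_gcd_of_dvd_right a (Int.natCast_dvd_natCast.mpr hnm))

theorem stmt7_general (p : ℕ) (hp : p.Prime)
    (n a1 a2 a3 : ℤ) (q1 q2 q3 : ℕ)
    (hp1 : p ∣ q1) (hp2 : p ∣ q2) (hp3 : ¬ p ∣ q3)
    (ha1 : Int.gcd a1 q1 = 1) (ha2 : Int.gcd a2 q2 = 1) :
    bfun n a1 a2 a3 q1 q2 q3 p =
      if (p : ℤ) ∣ (a1 + a2 - n) then (1 - (p : ℂ)) else 1 := by
  have hterm : ∀ a ∈ Ico 1 p,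
      ramanujanC a1 q1 a p * ramanujanC a2 q2 a p * ramanujanC a3 q3 a p * e (-n * a / p) =
        -e ((a1 + a2 - n : ℤ) * a / p) := by
    intro a ha
    have hpa : ¬ (p : ℤ) ∣ a := by
      rw [mem_Ico] at ha
      exact_mod_cast Nat.not_dvd_of_pos_of_lt ha.1 ha.2
    rw [ramanujanC_of_dvd hp.pos hp1 (Int.gcd_eq_one_of_dvd_right ha1 hp1),
      ramanujanC_of_dvd hp.pos hp2 (Int.gcd_eq_one_of_dvd_right ha2 hp2),
      ramanujanC_of_coprime (Nat.coprime_comm.mp (hp.coprime_iff_not_dvd.mpr hp3)),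
      hp.filter_coprime_Icc, sum_Ico_one_e hp.ne_zero, if_neg hpa,
      show ((a1 + a2 - n : ℤ) : ℂ) * a / p =
          ((a : ℤ) : ℂ) * a1 / p + (((a : ℤ) : ℂ) * a2 / p + -n * a / p) by push_cast; ring,
      e_add, e_add]
    ring
  rw [bfun, hp.filter_coprime_range, sum_congr rfl hterm, sum_neg_distrib,
    sum_Ico_one_e hp.ne_zero]
  split_ifs <;> ring

theorem stmt7 (p : ℕ) (hp : p.Prime)
    (n a1 a2 a3 : ℤ) (q1 q2 q3 : ℕ)
    (hq1 : 1 ≤ q1) (hq2 : 1 ≤ q2) (hq3 : 1 ≤ q3)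
    (hp1 : p ∣ q1) (hp2 : p ∣ q2) (hp3 : ¬ p ∣ q3)
    (ha1 : Int.gcd a1 q1 = 1) (ha2 : Int.gcd a2 q2 = 1) :
    bfun n a1 a2 a3 q1 q2 q3 p =
      if (p : ℤ) ∣ (a1 + a2 - n) then (1 - (p : ℂ)) else 1 :=
  stmt7_general p hp n a1 a2 a3 q1 q2 q3 hp1 hp2 hp3 ha1 ha2
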